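/- arXiv:2308.02975 — 2 statements merged into one kernel-verified Lean document; each statement's English description precedes it below -/
import Mathlib

section
/- Let G be a clique tree on n vertices with exactly b blocks, where each block has at least 3 vertices. Then Z(G) = n − b, and consequently ⌊n/2⌋ + 1 ≤ Z(G) ≤ n − 1. -/
open Classical

/-- The set of vertices eventually forced blue, starting from the blue set `S`,
under the color-change rule: a blue vertex with exactly one non-blue neighbor
forces that neighbor. -/
inductive SimpleGraph.Forced {V : Type*} (G : SimpleGraph V) (S : Set V) : V → Prop
  | init (v : V) (hv : v ∈ S) : SimpleGraph.Forced G S v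
  | force (u w : V) (hu : SimpleGraph.Forced G S u) (hadj : G.Adj u w)
      (hothers : ∀ y, G.Adj u y → y ≠ w → SimpleGraph.Forced G S y) :
      SimpleGraph.Forced G S w

/-- `S` is a zero forcing set of `G` if starting from `S` blue, every vertex
eventually becomes blue. -/
def SimpleGraph.IsZeroForcingSet {V : Type*} (G : SimpleGraph V) (S : Set V) : Prop :=
  ∀ v, G.Forced S v

/-- The zero forcing number `Z(G)`: the least size of a zero forcing set. -/
noncomputable def SimpleGraph.zeroForcingNumber {V : Type*} (G : SimpleGraph V) : ℕ :=
  sInf {n | ∃ S : Set V, S.ncard = n ∧ G.IsZeroForcingSet S}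

/-- The induced subgraph of `G` on `B` is connected and has no cut vertex. -/
def SimpleGraph.IsConnectedNoCutVertexSet {V : Type*} (G : SimpleGraph V) (B : Set V) : Prop :=
  (G.induce B).Connected ∧ ∀ v ∈ B, B \ {v} = ∅ ∨ (G.induce (B \ {v})).Connected

/-- `B` is (the vertex set of) a block of `G`: a maximal connected subgraph
without cut vertices. -/
def SimpleGraph.IsBlock {V : Type*} (G : SimpleGraph V) (B : Set V) : Prop :=
  G.IsConnectedNoCutVertexSet B ∧
    ∀ C, B ⊆ C → G.IsConnectedNoCutVertexSet C → B = C

/-- `v` is a cut vertex of `G`: `G` is connected but `G - v` is not. -/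
def SimpleGraph.IsCutVertex {V : Type*} (G : SimpleGraph V) (v : V) : Prop :=
  G.Connected ∧ ¬ (G.induce ({v}ᶜ : Set V)).Connected

/-- A clique tree: a connected graph each of whose blocks is a clique. -/
def SimpleGraph.IsCliqueTree {V : Type*} (G : SimpleGraph V) : Prop :=
  G.Connected ∧ ∀ B : Set V, G.IsBlock B → G.IsClique B

/-- The real adjacency matrix of a graph. -/
noncomputable def SimpleGraph.adjMatR {V : Type*} [Fintype V] (G : SimpleGraph V) :
    Matrix V V ℝ :=
  Matrix.of fun i j => if G.Adj i j then (1 : ℝ) else 0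

/-- The spectral radius of a (connected) graph: the largest real eigenvalue of
its adjacency matrix. -/
noncomputable def SimpleGraph.specRad {V : Type*} [Fintype V] (G : SimpleGraph V) : ℝ :=
  sSup {t : ℝ | ∃ x : V → ℝ, x ≠ 0 ∧ G.adjMatR.mulVec x = t • x}

/-- The clique tree `𝒢(n,k)` on vertex set `Fin n`: one block `K_{2k-n+2}`
(on the vertices `0, 1, …, 2k-n+1`) and `n-k-1` triangle blocks (on the vertex
`0` together with the pairs `{2k-n+2i, 2k-n+1+2i}` for `1 ≤ i ≤ n-k-1`), all
sharing the single central cut vertex `0`. -/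
def calG (n k : ℕ) : SimpleGraph (Fin n) :=
  SimpleGraph.fromRel (fun i j =>
    (i.val = 0 ∨ j.val = 0) ∨
    (i.val ≤ 2 * k - n + 1 ∧ j.val ≤ 2 * k - n + 1) ∨
    (2 * k - n + 1 < i.val ∧ 2 * k - n + 1 < j.val ∧
      (i.val - (2 * k - n + 2)) / 2 = (j.val - (2 * k - n + 2)) / 2))

/-!
Root the clique tree at a vertex `r`. Each block `B` has a unique vertex closest to `r`, its
gate `g B`, and every vertex is a non-gate of at most one block.

Lower bound: when a vertex is forced along an edge of a clique, all other vertices of that clique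
are already blue, so each block contains at most one vertex forced along one of its edges, and
at most `b` vertices can start white.

Upper bound: pick two non-gates `w B ≠ u B` in each block and start with exactly the `w B` white.
Then `u B` forces `w B` once `g B` and the white vertices of the blocks gated at `u B` are blue;
an induction down the tree and one up the tree colour everything.

Finally the non-gate sets are disjoint, have at least two vertices each and miss `r`, so
`2 b < n`, which gives `⌊n/2⌋ + 1 ≤ n - b`.
-/

lemma two_mul_card_lt_card_of_pairwise_disjoint {V ι : Type*} [Finite V] [Fintype ι]
    {N : ι → Set V} (hdisj : Pairwise fun i j => Disjoint (N i) (N j))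
    (hN : ∀ i, 2 ≤ (N i).ncard) {r : V} (hr : ∀ i, r ∉ N i) :
    2 * Fintype.card ι < Nat.card V := by
  have hsub : ⋃ i, N i ⊆ {r}ᶜ := Set.iUnion_subset fun i z hz (h : z = r) => hr i (h ▸ hz)
  have hcompl := Set.ncard_add_ncard_compl {r}
  rw [Set.ncard_singleton] at hcompl
  calc 2 * Fintype.card ι = ∑ _ : ι, 2 := by simp [mul_comm]
    _ ≤ ∑ i, (N i).ncard := Finset.sum_le_sum fun i _ => hN i
    _ = (⋃ i, N i).ncard := by
      rw [Set.ncard_iUnion_of_finite (fun _ => Set.toFinite _) hdisj, finsum_eq_sum_of_fintype]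
    _ ≤ ({r}ᶜ : Set V).ncard := Set.ncard_le_ncard hsub
    _ < Nat.card V := by omega

namespace SimpleGraph

variable {V : Type*} {G : SimpleGraph V}

section Blocks

lemma isConnectedNoCutVertexSet_singleton (x : V) : G.IsConnectedNoCutVertexSet {x} := by
  refine ⟨?_, fun v hv => .inl (by simp_all)⟩
  rw [induce_singleton_eq_top]
  exact connected_top

lemma isConnectedNoCutVertexSet_pair {u v : V} (h : G.Adj u v) :
    G.IsConnectedNoCutVertexSet {u, v} := by
  refine ⟨induce_pair_connected_of_adj h, fun z hz => .inr ?_⟩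
  rcases hz with rfl | rfl
  · rw [Set.pair_sdiff_left h.ne]
    exact (isConnectedNoCutVertexSet_singleton v).1
  · rw [Set.pair_sdiff_right h.ne]
    exact (isConnectedNoCutVertexSet_singleton u).1

lemma IsConnectedNoCutVertexSet.exists_isBlock_superset [Finite V] {T : Set V}
    (hT : G.IsConnectedNoCutVertexSet T) : ∃ K, G.IsBlock K ∧ T ⊆ K := by
  obtain ⟨K, hTK, hK⟩ := Finite.exists_le_maximal hT
  exact ⟨K, ⟨hK.prop, fun C hKC hC => (hK.eq_of_le hC hKC)⟩, hTK⟩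

lemma exists_isBlock_mem [Finite V] (x : V) : ∃ K, G.IsBlock K ∧ x ∈ K :=
  let ⟨K, hK, hxK⟩ := (isConnectedNoCutVertexSet_singleton x).exists_isBlock_superset
  ⟨K, hK, hxK rfl⟩

lemma Adj.exists_isBlock_mem_mem [Finite V] {x y : V} (h : G.Adj x y) :
    ∃ K, G.IsBlock K ∧ x ∈ K ∧ y ∈ K :=
  let ⟨K, hK, hxyK⟩ := (isConnectedNoCutVertexSet_pair h).exists_isBlock_superset
  ⟨K, hK, hxyK (.inl rfl), hxyK (.inr rfl)⟩

lemma IsConnectedNoCutVertexSet.connected_induce_diff_singleton {K : Set V}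
    (hK : G.IsConnectedNoCutVertexSet K) {v : V} (hne : (K \ {v}).Nonempty) :
    (G.induce (K \ {v})).Connected := by
  by_cases hvK : v ∈ K
  · exact (hK.2 v hvK).resolve_left hne.ne_empty
  · rw [Set.sdiff_singleton_eq_self hvK]
    exact hK.1

lemma Walk.IsPath.eq_of_mem_support_takeUntil_of_mem_support_dropUntil {x y w z : V}
    {p : G.Walk x y} (hp : p.IsPath) (hw : w ∈ p.support)
    (h₁ : z ∈ (p.takeUntil w hw).support) (h₂ : z ∈ (p.dropUntil w hw).support) : z = w := by
  by_contra hzw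
  rw [← Walk.cons_tail_support, List.mem_cons] at h₂
  have hnodup := hp.support_nodup
  rw [← p.take_spec hw, Walk.support_append] at hnodup
  exact List.disjoint_of_nodup_append hnodup h₁ (h₂.resolve_left hzw)

lemma Walk.IsPath.exists_walk_not_mem_support {x y w : V} {p : G.Walk x y} (hp : p.IsPath)
    (hw : w ∈ p.support) {v : V} (hwv : w ≠ v) :
    ∃ e ∈ ({x, y} : Set V), ∃ q : G.Walk e w,
      {z | z ∈ q.support} ⊆ {z | z ∈ p.support} ∧ v ∉ q.support := by
  by_cases hv : v ∈ (p.takeUntil w hw).support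
  · refine ⟨y, .inr rfl, (p.dropUntil w hw).reverse, fun z hz => ?_, fun hv' => ?_⟩
    · exact p.support_dropUntil_subset_support hw (by simpa using hz)
    · exact hwv (hp.eq_of_mem_support_takeUntil_of_mem_support_dropUntil hw hv
        (by simpa using hv')).symm
  · exact ⟨x, .inl rfl, p.takeUntil w hw,
      fun z hz => p.support_takeUntil_subset_support hw hz, hv⟩

/-- Adding to a block a path between two of its vertices yields a set that is still connected
after deleting any vertex, so maximality forces the path into the block. -/
lemma IsBlock.support_subset_of_isPath {K : Set V} (hK : G.IsBlock K) {x y : V} (hx : x ∈ K)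
    (hy : y ∈ K) {p : G.Walk x y} (hp : p.IsPath) : {z | z ∈ p.support} ⊆ K := by
  rcases eq_or_ne x y with rfl | hxy
  · rw [(Walk.isPath_iff_nil.mp hp).eq_nil]
    simpa using hx
  refine Set.union_subset_iff.mp (hK.2 _ Set.subset_union_left ⟨induce_union_connected
    hK.1.1.preconnected p.connected_induce_support.preconnected ⟨x, hx, p.start_mem_support⟩,
    fun v _ => .inr ?_⟩).symm.subset |>.2
  have hKv : (K \ {v}).Nonempty := by
    obtain ⟨a, ha, hav⟩ := (Set.nontrivial_of_mem_mem_ne hx hy hxy).exists_ne v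
    exact ⟨a, ha, hav⟩
  have hKv_conn := hK.1.connected_induce_diff_singleton hKv
  obtain ⟨a, ha⟩ := hKv
  refine induce_connected_of_patches a ⟨.inl ha.1, ha.2⟩ fun {w} hw => ?_
  have hsub : K \ {v} ⊆ (K ∪ {z | z ∈ p.support}) \ {v} :=
    Set.sdiff_subset_sdiff_left Set.subset_union_left
  by_cases hwK : w ∈ K
  · exact ⟨K \ {v}, hsub, ha, ⟨hwK, hw.2⟩, hKv_conn.preconnected _ _⟩
  obtain ⟨e, he, q, hqp, hvq⟩ := hp.exists_walk_not_mem_support (hw.1.resolve_left hwK) hw.2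
  have heK : e ∈ K \ {v} :=
    ⟨by rcases he with rfl | rfl <;> assumption, fun h => hvq (h ▸ q.start_mem_support)⟩
  have hconn := induce_union_connected hKv_conn.preconnected
    q.connected_induce_support.preconnected ⟨e, heK, q.start_mem_support⟩
  refine ⟨_, Set.union_subset hsub fun z hz => ⟨.inr (hqp hz), fun h => hvq (h ▸ hz)⟩,
    .inl ha, .inr q.end_mem_support, hconn.preconnected _ _⟩

lemma IsBlock.eq_of_nontrivial_inter {K₁ K₂ : Set V} (h₁ : G.IsBlock K₁) (h₂ : G.IsBlock K₂)
    (h : (K₁ ∩ K₂).Nontrivial) : K₁ = K₂ := by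
  have hU : G.IsConnectedNoCutVertexSet (K₁ ∪ K₂) := by
    refine ⟨induce_union_connected h₁.1.1.preconnected h₂.1.1.preconnected h.nonempty,
      fun v _ => .inr ?_⟩
    obtain ⟨a, ⟨ha₁, ha₂⟩, hav⟩ := h.exists_ne v
    rw [Set.union_sdiff_distrib]
    exact induce_union_connected
      (h₁.1.connected_induce_diff_singleton ⟨a, ha₁, hav⟩).preconnected
      (h₂.1.connected_induce_diff_singleton ⟨a, ha₂, hav⟩).preconnected
      ⟨a, ⟨ha₁, hav⟩, ha₂, hav⟩
  have hK₂K₁ : K₂ ⊆ K₁ := Set.union_eq_left.mp (h₁.2 _ Set.subset_union_left hU).symm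
  exact (h₂.2 K₁ hK₂K₁ h₁.1).symm

lemma IsBlock.exists_adj_mem_edges {K : Set V} (hK : G.IsBlock K) {a c : V} (ha : a ∈ K)
    (hc : c ∈ K) (hac : a ≠ c) (W : G.Walk a c) : ∃ v ∈ K, G.Adj a v ∧ s(a, v) ∈ W.edges := by
  obtain ⟨v, hadj, q, hq⟩ := Walk.exists_eq_cons_of_ne hac W.bypass
  refine ⟨v, hK.support_subset_of_isPath ha hc W.bypass_isPath ?_, hadj,
    W.edges_bypass_subset_edges ?_⟩
  · simp [hq]
  · simp [hq]

end Blocks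

section Gates

variable {r : V}

lemma Walk.dist_lt_of_mem_support {v y : V} {p : G.Walk r v} (hp : p.length = G.dist r v)
    (hy : y ∈ p.support) (hyv : y ≠ v) : G.dist r y < G.dist r v :=
  calc G.dist r y ≤ (p.takeUntil y hy).length := dist_le _
    _ < p.length := Walk.length_takeUntil_lt_length hy hyv
    _ = G.dist r v := hp

lemma Walk.dist_le_of_mem_support {v y : V} {p : G.Walk r v} (hp : p.length = G.dist r v)
    (hy : y ∈ p.support) : G.dist r y ≤ G.dist r v := by
  rcases eq_or_ne y v with rfl | hyv
  · exact le_rfl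
  · exact (p.dist_lt_of_mem_support hp hy hyv).le

/-- Joining shortest paths from `r` to two closest vertices of a block gives a walk whose first
edge, taken inside the block, would lead to a vertex closer to `r`. -/
lemma IsBlock.eq_of_forall_dist_le (hconn : G.Connected) {K : Set V} (hK : G.IsBlock K)
    {u u' : V} (hu : u ∈ K) (hu' : u' ∈ K) (hmin : ∀ z ∈ K, G.dist r u ≤ G.dist r z)
    (hle : G.dist r u' ≤ G.dist r u) : u' = u := by
  by_contra hne
  obtain ⟨P, -, hP⟩ := hconn.exists_path_of_dist r u'
  obtain ⟨P', -, hP'⟩ := hconn.exists_path_of_dist r u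
  obtain ⟨v, hvK, hadj, hedge⟩ := hK.exists_adj_mem_edges hu' hu hne (P.reverse.append P')
  rw [Walk.edges_append, List.mem_append, Walk.edges_reverse, List.mem_reverse] at hedge
  rcases hedge with hedge | hedge
  · have := P.dist_lt_of_mem_support hP (P.snd_mem_support_of_mem_edges hedge) hadj.ne'
    have := hmin v hvK
    omega
  · have := P'.dist_lt_of_mem_support hP' (P'.fst_mem_support_of_mem_edges hedge) hne
    have := hmin u' hu'
    omega

lemma IsBlock.exists_forall_dist_lt [Finite V] (hconn : G.Connected) {K : Set V}
    (hK : G.IsBlock K) (r : V) : ∃ g ∈ K, ∀ z ∈ K, z ≠ g → G.dist r g < G.dist r z := by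
  obtain ⟨g, hg, hmin⟩ := Set.exists_min_image K (G.dist r) K.toFinite
    (Set.nonempty_coe_sort.mp hK.1.1.nonempty)
  exact ⟨g, hg, fun z hz hzg =>
    lt_of_not_ge fun hle => hzg (hK.eq_of_forall_dist_le hconn hg hz hmin hle)⟩

/-- The walk `v u₂ ⋯ r ⋯ u₁` must leave `v` inside `K₁`: along `v u₂` this puts two vertices in
`K₁ ∩ K₂`, along a shortest path it contradicts `v` being farther from `r`. -/
lemma IsBlock.eq_of_dist_lt_of_dist_lt (hconn : G.Connected) {K₁ K₂ : Set V}
    (hK₁ : G.IsBlock K₁) (hK₂ : G.IsBlock K₂) (hclique : G.IsClique K₂) {v u₁ u₂ : V}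
    (hv₁ : v ∈ K₁) (hv₂ : v ∈ K₂) (hu₁ : u₁ ∈ K₁) (hu₂ : u₂ ∈ K₂)
    (hd₁ : G.dist r u₁ < G.dist r v) (hd₂ : G.dist r u₂ < G.dist r v) : K₁ = K₂ := by
  have hvu₂ : v ≠ u₂ := by rintro rfl; omega
  have hvu₁ : v ≠ u₁ := by rintro rfl; omega
  obtain ⟨S₁, -, hS₁⟩ := hconn.exists_path_of_dist r u₁
  obtain ⟨S₂, -, hS₂⟩ := hconn.exists_path_of_dist r u₂
  obtain ⟨w, hwK₁, -, hedge⟩ := hK₁.exists_adj_mem_edges hv₁ hu₁ hvu₁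
    (.cons (hclique hv₂ hu₂ hvu₂) (S₂.reverse.append S₁))
  simp only [Walk.edges_cons, Walk.edges_append, Walk.edges_reverse, List.mem_cons,
    List.mem_append, List.mem_reverse] at hedge
  rcases hedge with hedge | hedge | hedge
  · obtain rfl : w = u₂ := Sym2.congr_right.mp hedge
    exact hK₁.eq_of_nontrivial_inter hK₂
      (Set.nontrivial_of_mem_mem_ne ⟨hv₁, hv₂⟩ ⟨hwK₁, hu₂⟩ hvu₂)
  · have := S₂.dist_le_of_mem_support hS₂ (S₂.fst_mem_support_of_mem_edges hedge)
    omega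
  · have := S₁.dist_le_of_mem_support hS₁ (S₁.fst_mem_support_of_mem_edges hedge)
    omega

end Gates

section ZeroForcing

def forceStep (G : SimpleGraph V) (X : Set V) : Set V :=
  X ∪ {w | ∃ u ∈ X, G.Adj u w ∧ ∀ y, G.Adj u y → y ≠ w → y ∈ X}

lemma monotone_iterate_forceStep (S : Set V) : Monotone fun k => G.forceStep^[k] S :=
  fun _ _ h => Function.monotone_iterate_of_id_le (fun _ => Set.subset_union_left) h S

lemma Forced.exists_mem_iterate_forceStep [Finite V] {S : Set V} {v : V} (h : G.Forced S v) :
    ∃ k, v ∈ G.forceStep^[k] S := by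
  induction h with
  | init v hv => exact ⟨0, hv⟩
  | @force u w _ hadj _ ihu ihothers =>
    obtain ⟨k₀, hk₀⟩ := ihu
    choose k hk using fun y : {y // G.Adj u y ∧ y ≠ w} => ihothers y y.2.1 y.2.2
    obtain ⟨M, hM⟩ := Finite.exists_le k
    refine ⟨max k₀ M + 1, ?_⟩
    rw [Function.iterate_succ_apply']
    refine .inr ⟨u, monotone_iterate_forceStep S (le_max_left _ _) hk₀, hadj,
      fun y hy hyw => ?_⟩
    exact monotone_iterate_forceStep S ((hM ⟨y, hy, hyw⟩).trans (le_max_right _ _)) (hk _)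

variable {ι : Type*} {B : ι → Set V}

lemma exists_diff_subset_of_mem_forceStep (hclique : ∀ i, G.IsClique (B i))
    (hcover : ∀ ⦃x y⦄, G.Adj x y → ∃ i, x ∈ B i ∧ y ∈ B i) {X : Set V} {v : V}
    (hv : v ∈ G.forceStep X) (hvX : v ∉ X) : ∃ i, v ∈ B i ∧ B i \ {v} ⊆ X := by
  obtain hv | ⟨u, hu, hadj, hothers⟩ := hv
  · exact absurd hv hvX
  obtain ⟨i, hui, hvi⟩ := hcover hadj
  refine ⟨i, hvi, fun z ⟨hz, hzv⟩ => ?_⟩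
  rcases eq_or_ne z u with rfl | hzu
  · exact hu
  · exact hothers z (hclique i hui hz hzu.symm) hzv

lemma ncard_compl_le_of_isZeroForcingSet [Finite V] [Finite ι]
    (hclique : ∀ i, G.IsClique (B i)) (hcover : ∀ ⦃x y⦄, G.Adj x y → ∃ i, x ∈ B i ∧ y ∈ B i)
    {S : Set V} (hS : G.IsZeroForcingSet S) : Sᶜ.ncard ≤ Nat.card ι := by
  classical
  have hex : ∀ v, ∃ k, v ∈ G.forceStep^[k] S := fun v => (hS v).exists_mem_iterate_forceStep
  set t : V → ℕ := fun v => Nat.find (hex v)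
  have hlast : ∀ v : ↥Sᶜ, ∃ i, v.1 ∈ B i ∧ B i \ {v.1} ⊆ G.forceStep^[t v - 1] S := by
    rintro ⟨v, hv⟩
    have ht : t v ≠ 0 := fun h => hv (by simpa [t, h] using Nat.find_spec (hex v))
    have hmem : v ∈ G.forceStep (G.forceStep^[t v - 1] S) := by
      rw [← Function.iterate_succ_apply' G.forceStep, Nat.succ_eq_add_one, Nat.sub_add_cancel
        (Nat.one_le_iff_ne_zero.mpr ht)]
      exact Nat.find_spec (hex v)
    exact exists_diff_subset_of_mem_forceStep hclique hcover hmem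
      (Nat.find_min (hex v) (Nat.sub_lt (Nat.pos_of_ne_zero ht) one_pos))
  choose f hf using hlast
  have hlt : ∀ a c : ↥Sᶜ, f a = f c → a ≠ c → t c < t a := fun a c hac hne => by
    have hc : c.1 ∈ B (f a) \ {a.1} := ⟨hac ▸ (hf c).1, fun h => hne (Subtype.ext h).symm⟩
    have : t c ≤ t a - 1 := Nat.find_min' (hex c.1) ((hf a).2 hc)
    have : t a ≠ 0 := fun h => a.2 (by simpa [t, h] using Nat.find_spec (hex a.1))
    omega
  have hinj : Function.Injective f := fun a c hac => by
    by_contra hne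
    have := hlt a c hac hne
    have := hlt c a hac.symm (Ne.symm hne)
    omega
  simpa [Nat.card_coe_set_eq] using Nat.card_le_card_of_injective f hinj

lemma zeroForcingNumber_eq_ncard {S : Set V} (hS : G.IsZeroForcingSet S)
    (hmin : ∀ T, G.IsZeroForcingSet T → S.ncard ≤ T.ncard) : G.zeroForcingNumber = S.ncard :=
  le_antisymm (Nat.sInf_le ⟨S, rfl, hS⟩)
    (le_csInf ⟨_, S, rfl, hS⟩ fun _ ⟨T, hT, hTzf⟩ => hT ▸ hmin T hTzf)

variable {d : V → ℕ} {g w u : ι → V}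

/-- `d` plays the role of the distance from the root and `g i` that of the gate of `B i`; the
induction runs down the cliques, away from the root. -/
lemma forced_of_forced_gate [Finite V] (hclique : ∀ i, G.IsClique (B i))
    (hcover : ∀ ⦃x y⦄, G.Adj x y → ∃ i, x ∈ B i ∧ y ∈ B i)
    (hgate : ∀ i, ∀ z ∈ B i, z ≠ g i → d (g i) < d z)
    (hunique : ∀ ⦃i j v⦄, v ∈ B i → v ≠ g i → v ∈ B j → v ≠ g j → i = j)
    (hw : ∀ i, w i ∈ B i \ {g i}) (hu : ∀ i, u i ∈ B i \ {g i}) (hwu : ∀ i, w i ≠ u i) (i : ι)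
    (hg : G.Forced (Set.range w)ᶜ (g i)) : G.Forced (Set.range w)ᶜ (w i) := by
  set S := (Set.range w)ᶜ
  have huS : ∀ i, u i ∈ S := by
    rintro i ⟨m, hm⟩
    obtain rfl := hunique (hw m).1 (hw m).2 (hm ▸ (hu i).1) (hm ▸ (hu i).2)
    exact hwu m hm
  obtain ⟨M, hM⟩ := Finite.exists_le d
  induction i using (measure fun i => M - d (g i)).wf.induction with | _ i IH => ?_
  refine .force (u i) (w i) (.init _ (huS i)) (hclique i (hu i).1 (hw i).1 (hwu i).symm)
    fun y hy hyw => ?_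
  by_cases hyS : y ∈ S
  · exact .init _ hyS
  obtain ⟨m, rfl⟩ := not_not.mp hyS
  obtain ⟨j, huj, hmj⟩ := hcover hy
  by_cases hji : j = i
  · subst hji
    obtain hgm | hgm := eq_or_ne (w m) (g j)
    · exact hgm ▸ hg
    · exact absurd (congrArg w (hunique (hw m).1 (hw m).2 hmj hgm)) hyw
  have hgj : g j = u i := by_contra fun h => hji (hunique huj (Ne.symm h) (hu i).1 (hu i).2)
  obtain rfl : m = j := hunique (hw m).1 (hw m).2 hmj fun h => hy.ne (h.trans hgj).symm
  refine IH m ?_ (hgj ▸ .init _ (huS i))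
  have := hgate i (u i) (hu i).1 (hu i).2
  have := hM (u i)
  change M - d (g m) < M - d (g i)
  rw [hgj]
  omega

lemma isZeroForcingSet_compl_range [Finite V] (hclique : ∀ i, G.IsClique (B i))
    (hcover : ∀ ⦃x y⦄, G.Adj x y → ∃ i, x ∈ B i ∧ y ∈ B i)
    (hgate : ∀ i, ∀ z ∈ B i, z ≠ g i → d (g i) < d z)
    (hunique : ∀ ⦃i j v⦄, v ∈ B i → v ≠ g i → v ∈ B j → v ≠ g j → i = j)
    (hw : ∀ i, w i ∈ B i \ {g i}) (hu : ∀ i, u i ∈ B i \ {g i}) (hwu : ∀ i, w i ≠ u i) :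
    G.IsZeroForcingSet (Set.range w)ᶜ := by
  have hforced : ∀ i, G.Forced (Set.range w)ᶜ (w i) := by
    intro i
    induction i using (measure fun i => d (g i)).wf.induction with | _ i IH => ?_
    refine forced_of_forced_gate hclique hcover hgate hunique hw hu hwu i ?_
    by_cases hgS : g i ∈ Set.range w
    · obtain ⟨m, hm⟩ := hgS
      have hlt : d (g m) < d (g i) := hm ▸ hgate m (w m) (hw m).1 (hw m).2
      exact hm ▸ IH m hlt
    · exact .init _ hgS
  intro v
  by_cases hv : v ∈ Set.range w
  · obtain ⟨i, rfl⟩ := hv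
    exact hforced i
  · exact .init _ hv

lemma zeroForcingNumber_eq_card_sub_card [Finite V] [Finite ι]
    (hclique : ∀ i, G.IsClique (B i)) (hcover : ∀ ⦃x y⦄, G.Adj x y → ∃ i, x ∈ B i ∧ y ∈ B i)
    (hgate : ∀ i, ∀ z ∈ B i, z ≠ g i → d (g i) < d z)
    (hunique : ∀ ⦃i j v⦄, v ∈ B i → v ≠ g i → v ∈ B j → v ≠ g j → i = j)
    (hw : ∀ i, w i ∈ B i \ {g i}) (hu : ∀ i, u i ∈ B i \ {g i}) (hwu : ∀ i, w i ≠ u i) :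
    G.zeroForcingNumber = Nat.card V - Nat.card ι := by
  have hinj : Function.Injective w := fun i j h =>
    hunique (hw i).1 (hw i).2 (h ▸ (hw j).1) (h ▸ (hw j).2)
  have hcard : ∀ T : Set V, T.ncard + Tᶜ.ncard = Nat.card V := fun T => T.ncard_add_ncard_compl
  have hrange := Set.ncard_range_of_injective hinj
  have := hcard (Set.range w)
  rw [zeroForcingNumber_eq_ncard
    (isZeroForcingSet_compl_range hclique hcover hgate hunique hw hu hwu) fun T hT => ?_]
  · omega
  · have := ncard_compl_le_of_isZeroForcingSet hclique hcover hT
    have := hcard T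
    omega

end ZeroForcing

end SimpleGraph

/-- Let `G` be a clique tree on `n` vertices with exactly `b`
blocks, each of size at least 3.  Then `Z(G) = n − b`, and consequently
`⌊n/2⌋ + 1 ≤ Z(G) ≤ n − 1`. -/
theorem zeroForcing_cliqueTree_eq_card_sub_blocks {V : Type*} [Fintype V]
    (G : SimpleGraph V) (hG : G.IsCliqueTree)
    (n b : ℕ) (hn : Fintype.card V = n)
    (B : Fin b → Set V) (hinj : Function.Injective B)
    (hblock : ∀ i, G.IsBlock (B i))
    (hall : ∀ C : Set V, G.IsBlock C → ∃ i, C = B i)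
    (hsize : ∀ i, 3 ≤ (B i).ncard) :
    G.zeroForcingNumber = n - b ∧
      n / 2 + 1 ≤ G.zeroForcingNumber ∧ G.zeroForcingNumber ≤ n - 1 := by
  obtain ⟨hconn, hclique⟩ := hG
  obtain ⟨r⟩ := hconn.nonempty
  have hcover : ∀ ⦃x y⦄, G.Adj x y → ∃ i, x ∈ B i ∧ y ∈ B i := fun x y hxy => by
    obtain ⟨K, hK, hxK, hyK⟩ := hxy.exists_isBlock_mem_mem
    obtain ⟨i, rfl⟩ := hall K hK
    exact ⟨i, hxK, hyK⟩
  choose g hgB hgate using fun i => (hblock i).exists_forall_dist_lt hconn r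
  have hunique : ∀ ⦃i j v⦄, v ∈ B i → v ≠ g i → v ∈ B j → v ≠ g j → i = j :=
    fun i j v hvi hgi hvj hgj => hinj <| (hblock i).eq_of_dist_lt_of_dist_lt hconn (hblock j)
      (hclique _ (hblock j)) hvi hvj (hgB i) (hgB j) (hgate i v hvi hgi) (hgate j v hvj hgj)
  have hN : ∀ i, 2 ≤ (B i \ {g i}).ncard := fun i => by
    have := hsize i
    rw [Set.ncard_sdiff_singleton_of_mem (hgB i)]
    omega
  choose w u hw hu hwu using fun i => (Set.one_lt_ncard_iff).mp (hN i)
  have hZ : G.zeroForcingNumber = n - b := by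
    simpa [hn] using SimpleGraph.zeroForcingNumber_eq_card_sub_card
      (fun i => hclique _ (hblock i)) hcover hgate hunique hw hu hwu
  have hb : 0 < b := by
    obtain ⟨K, hK, -⟩ := SimpleGraph.exists_isBlock_mem (G := G) r
    exact (hall K hK).choose.pos
  have hcount : 2 * b < n := by
    simpa [hn] using two_mul_card_lt_card_of_pairwise_disjoint (N := fun i => B i \ {g i})
      (fun i j hij => Set.disjoint_left.mpr fun v hvi hvj => hij (hunique hvi.1 hvi.2 hvj.1 hvj.2))
      hN fun i hr => by simpa using hgate i r hr.1 hr.2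
  refine ⟨hZ, ?_, ?_⟩ <;> omega
end

section
/- For integers n, k with ⌊n/2⌋ + 1 ≤ k ≤ n − 1, the zero forcing number of the graph 𝒢(n,k) equals k, i.e., Z(𝒢(n,k)) = k. -/
/-!
`𝒢(n,k)` is the cone with apex `0` over the disjoint union of `K_{2k-n+1}` and `n-k-1` copies of
`K_2`. For a cone over cliques that all have at least two vertices, `Z = |V| - #cliques`.
Upper bound: colour white the apex and one vertex of every clique but one; a vertex of the
all-blue clique forces the apex, after which every clique forces its white vertex.
Lower bound: two vertices of one clique are twins, so they form a fort, and a zero forcing set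
meets every nonempty fort; hence it misses at most one vertex per clique. If it also misses the
apex and a vertex of every clique, its complement is a fort, which is impossible.
-/

open Classical

namespace SimpleGraph

variable {V : Type*} {G : SimpleGraph V}

def IsFort (G : SimpleGraph V) (F : Set V) : Prop :=
  ∀ ⦃u v⦄, u ∉ F → v ∈ F → G.Adj u v → ∃ w ∈ F, w ≠ v ∧ G.Adj u w

theorem Forced.notMem_of_isFort {S F : Set V} (hF : G.IsFort F) (hSF : Disjoint S F) {v : V}
    (hv : G.Forced S v) : v ∉ F := by
  induction hv with
  | init v hv => exact Set.disjoint_left.1 hSF hv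
  | force u w _ hadj _ ihu ih =>
    intro hw
    obtain ⟨y, hy, hyw, huy⟩ := hF ihu hw hadj
    exact ih y huy hyw hy

theorem IsZeroForcingSet.inter_nonempty_of_isFort {S F : Set V} (hS : G.IsZeroForcingSet S)
    (hF : G.IsFort F) (hne : F.Nonempty) : (S ∩ F).Nonempty := by
  obtain ⟨v, hv⟩ := hne
  by_contra h
  exact (hS v).notMem_of_isFort hF
    (Set.disjoint_iff_inter_eq_empty.2 (Set.not_nonempty_iff_eq_empty.1 h)) hv

theorem isFort_pair {x y : V} (hxy : x ≠ y)
    (htwin : ∀ u, u ≠ x → u ≠ y → (G.Adj u x ↔ G.Adj u y)) : G.IsFort {x, y} := by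
  rintro u v hu (rfl | rfl) hadj <;> simp only [Set.mem_insert_iff, Set.mem_singleton_iff,
    not_or] at hu
  · exact ⟨y, by simp, hxy.symm, (htwin u hu.1 hu.2).1 hadj⟩
  · exact ⟨x, by simp, hxy, (htwin u hu.1 hu.2).2 hadj⟩

theorem IsZeroForcingSet.mem_or_mem_of_twins {S : Set V} (hS : G.IsZeroForcingSet S) {x y : V}
    (hxy : x ≠ y) (htwin : ∀ u, u ≠ x → u ≠ y → (G.Adj u x ↔ G.Adj u y)) : x ∈ S ∨ y ∈ S := by
  obtain ⟨v, hvS, hv⟩ := hS.inter_nonempty_of_isFort (isFort_pair hxy htwin) ⟨x, by simp⟩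
  rcases hv with rfl | rfl
  exacts [Or.inl hvS, Or.inr hvS]

/-- `G` is the cone with apex `z` over the disjoint union of the cliques formed by the fibres of
`c` on the other vertices (the value `c z` plays no role). -/
def IsConeOverCliques {β : Type*} (G : SimpleGraph V) (z : V) (c : V → β) : Prop :=
  ∀ u v, G.Adj u v ↔ u ≠ v ∧ (u = z ∨ v = z ∨ c u = c v)

namespace IsConeOverCliques

variable {β : Type*} {z : V} {c : V → β}

theorem adj_apex (h : G.IsConeOverCliques z c) {u : V} (hu : u ≠ z) : G.Adj u z :=
  (h u z).2 ⟨hu, Or.inr (Or.inl rfl)⟩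

theorem eq_of_adj (h : G.IsConeOverCliques z c) {u v : V} (huv : G.Adj u v) (hu : u ≠ z)
    (hv : v ≠ z) : c u = c v := by
  obtain ⟨-, rfl | rfl | hc⟩ := (h u v).1 huv
  exacts [absurd rfl hu, absurd rfl hv, hc]

theorem adj_iff_adj_of_eq (h : G.IsConeOverCliques z c) {x y : V} (hx : x ≠ z) (hy : y ≠ z)
    (hxy : c x = c y) (u : V) (hux : u ≠ x) (huy : u ≠ y) : G.Adj u x ↔ G.Adj u y := by
  rw [h u x, h u y, hxy]
  simp [hux, huy, hx, hy]

theorem isFort_compl (h : G.IsConeOverCliques z c) {S : Set V} (hz : z ∉ S)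
    (hparts : ∀ u ≠ z, ∃ w ∉ S, w ≠ z ∧ c w = c u) : G.IsFort Sᶜ := by
  intro u v hu hv huv
  have huz : u ≠ z := by rintro rfl; exact hu hz
  obtain ⟨w, hwS, hwz, hwu⟩ := hparts u huz
  have hadj : G.Adj u w := (h u w).2 ⟨by rintro rfl; exact hu hwS, Or.inr (Or.inr hwu.symm)⟩
  by_cases hvz : v = z
  · exact ⟨w, hwS, hvz ▸ hwz, hadj⟩
  · exact ⟨z, hz, Ne.symm hvz, h.adj_apex huz⟩

variable [Finite V]

theorem ncard_le_of_isZeroForcingSet (h : G.IsConeOverCliques z c) {S : Set V}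
    (hS : G.IsZeroForcingSet S) : Nat.card V ≤ S.ncard + (c '' {z}ᶜ).ncard := by
  have hinj : Set.InjOn c (Sᶜ \ {z}) := by
    rintro x ⟨hxS, hxz⟩ y ⟨hyS, hyz⟩ hxy
    by_contra hne
    rcases hS.mem_or_mem_of_twins hne (h.adj_iff_adj_of_eq hxz hyz hxy) with h' | h'
    exacts [hxS h', hyS h']
  have hsub : c '' (Sᶜ \ {z}) ⊆ c '' {z}ᶜ := Set.image_mono fun _ hx => hx.2
  have hS' := Set.ncard_add_ncard_compl S
  by_cases hz : z ∈ S
  · have := Set.ncard_le_ncard hsub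
    rw [hinj.ncard_image, Set.sdiff_singleton_eq_self (by simpa using hz)] at this
    omega
  · have hlt : (c '' (Sᶜ \ {z})).ncard < (c '' {z}ᶜ).ncard := by
      refine Set.ncard_lt_ncard ⟨hsub, fun hsup => ?_⟩
      have hfort : G.IsFort Sᶜ := h.isFort_compl hz fun u hu => by
        obtain ⟨w, ⟨hwS, hwz⟩, hwu⟩ := hsup ⟨u, hu, rfl⟩
        exact ⟨w, hwS, hwz, hwu⟩
      obtain ⟨v, hvS, hv⟩ := hS.inter_nonempty_of_isFort hfort ⟨z, hz⟩
      exact hv hvS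
    have := Set.ncard_sdiff_singleton_add_one (s := Sᶜ) hz
    rw [← hinj.ncard_image] at this
    omega

theorem exists_isZeroForcingSet (h : G.IsConeOverCliques z c)
    (hparts : ∀ u ≠ z, ∃ w ≠ z, w ≠ u ∧ c w = c u) {v₀ : V} (hv₀ : v₀ ≠ z) :
    ∃ S : Set V, S.ncard + (c '' {z}ᶜ).ncard = Nat.card V ∧ G.IsZeroForcingSet S := by
  have : Nonempty V := ⟨z⟩
  set r := Function.invFunOn c {z}ᶜ
  have hr : ∀ u ≠ z, r (c u) ≠ z ∧ c (r (c u)) = c u := fun u hu =>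
    ⟨Set.mem_compl_singleton_iff.1 (Function.invFunOn_mem ⟨u, hu, rfl⟩),
      Function.invFunOn_eq ⟨u, hu, rfl⟩⟩
  set W := insert z (r '' (c '' {z}ᶜ \ {c v₀}))
  have hW : ∀ y ∈ W, y ≠ z → c y ≠ c v₀ ∧ r (c y) = y := by
    rintro y (rfl | ⟨_, ⟨⟨u, hu, rfl⟩, hne⟩, rfl⟩) hyz
    · exact absurd rfl hyz
    · rw [(hr u hu).2]
      exact ⟨hne, rfl⟩
  refine ⟨Wᶜ, ?_, ?_⟩
  · have hzW : z ∉ r '' (c '' {z}ᶜ \ {c v₀}) := by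
      rintro ⟨_, ⟨⟨u, hu, rfl⟩, -⟩, hzu⟩
      exact (hr u hu).1 hzu
    have hrinj : Set.InjOn r (c '' {z}ᶜ \ {c v₀}) := by
      rintro _ ⟨⟨u, hu, rfl⟩, -⟩ _ ⟨⟨w, hw, rfl⟩, -⟩ huw
      rw [← (hr u hu).2, ← (hr w hw).2, huw]
    have hWcard : W.ncard = (c '' {z}ᶜ).ncard := by
      rw [Set.ncard_insert_of_notMem hzW, hrinj.ncard_image,
        Set.ncard_sdiff_singleton_add_one (Set.mem_image_of_mem c hv₀)]
    rw [← hWcard, Set.ncard_compl_add_ncard]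
  · have hblue : ∀ y, y ≠ z → c y = c v₀ → y ∈ Wᶜ := fun y hyz hy hyW =>
      (hW y hyW hyz).1 hy
    have happex : G.Forced Wᶜ z := by
      refine .force v₀ z (.init _ (hblue v₀ hv₀ rfl)) (h.adj_apex hv₀) fun y hy hyz => ?_
      exact .init _ (hblue y hyz (h.eq_of_adj hy hv₀ hyz).symm)
    intro v
    by_cases hv : v ∈ Wᶜ
    · exact .init _ hv
    by_cases hvz : v = z
    · exact hvz ▸ happex
    obtain ⟨-, hrv⟩ := hW v (not_not.1 hv) hvz
    have hpart : ∀ y, y ≠ z → c y = c v → y ≠ v → y ∈ Wᶜ := fun y hyz hy hyv hyW =>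
      hyv ((hW y hyW hyz).2.symm.trans (hy ▸ hrv))
    obtain ⟨w, hwz, hwv, hw⟩ := hparts v hvz
    refine .force w v (.init _ (hpart w hwz hw hwv)) ((h w v).2 ⟨hwv, Or.inr (Or.inr hw)⟩)
      fun y hy hyv => ?_
    by_cases hyz : y = z
    · exact hyz ▸ happex
    · exact .init _ (hpart y hyz ((h.eq_of_adj hy hwz hyz).symm.trans hw) hyv)

theorem zeroForcingNumber_eq (h : G.IsConeOverCliques z c)
    (hparts : ∀ u ≠ z, ∃ w ≠ z, w ≠ u ∧ c w = c u) {v₀ : V} (hv₀ : v₀ ≠ z) :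
    G.zeroForcingNumber = Nat.card V - (c '' {z}ᶜ).ncard := by
  obtain ⟨S, hS, hZ⟩ := h.exists_isZeroForcingSet hparts hv₀
  refine IsLeast.csInf_eq ⟨⟨S, by omega, hZ⟩, ?_⟩
  rintro _ ⟨T, rfl, hT⟩
  have := h.ncard_le_of_isZeroForcingSet hT
  omega

end IsConeOverCliques

end SimpleGraph

/-- The index of the clique of `𝒢(n,k) - 0` containing `v`: `0` for `K_{2k-n+1}`, `i` for the
`i`-th edge. -/
def calGBlock (n k : ℕ) (v : Fin n) : ℕ :=
  (v.val + 1 - (2 * k - n + 1)) / 2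

section calG

variable {n k : ℕ}

theorem calG_isConeOverCliques [NeZero n] : (calG n k).IsConeOverCliques 0 (calGBlock n k) := by
  intro u v
  simp only [calG, SimpleGraph.fromRel_adj, calGBlock, ne_eq, Fin.ext_iff, Fin.val_zero]
  constructor <;> intro h <;> omega

theorem calGBlock_image [NeZero n] (hk1 : n / 2 + 1 ≤ k) (hk2 : k ≤ n - 1) :
    calGBlock n k '' {0}ᶜ = Set.Iio (n - k) := by
  ext b
  simp only [Set.mem_image, Set.mem_compl_singleton_iff, Set.mem_Iio, calGBlock, ne_eq,
    Fin.ext_iff]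
  constructor
  · rintro ⟨v, -, rfl⟩
    omega
  · intro hb
    rcases b with _ | b
    · exact ⟨⟨1, by omega⟩, by simp, by simp⟩
    · exact ⟨⟨2 * k - n + 2 + 2 * b, by omega⟩, by simp, by simp; omega⟩

theorem calGBlock_exists_ne [NeZero n] (hk1 : n / 2 + 1 ≤ k) (hk2 : k ≤ n - 1) (u : Fin n)
    (hu : u ≠ 0) : ∃ w ≠ 0, w ≠ u ∧ calGBlock n k w = calGBlock n k u := by
  simp only [ne_eq, Fin.ext_iff, calGBlock] at hu ⊢
  by_cases hclique : u.val ≤ 2 * k - n + 1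
  · by_cases hu1 : u.val = 1
    · exact ⟨⟨2, by omega⟩, by simp, by simp; omega, by simp; omega⟩
    · exact ⟨⟨1, by omega⟩, by simp, by simp; omega, by simp; omega⟩
  · by_cases hfirst : (u.val - (2 * k - n + 1)) % 2 = 1
    · exact ⟨⟨u.val + 1, by omega⟩, by simp, by simp, by simp; omega⟩
    · exact ⟨⟨u.val - 1, by omega⟩, by simp; omega, by simp; omega, by simp; omega⟩

end calG

/-- For `⌊n/2⌋ + 1 ≤ k ≤ n − 1`, the zero forcing number of
`𝒢(n,k)` equals `k`. -/
theorem zeroForcing_calG (n k : ℕ) (hk1 : n / 2 + 1 ≤ k) (hk2 : k ≤ n - 1) :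
    (calG n k).zeroForcingNumber = k := by
  have : NeZero n := ⟨by omega⟩
  rw [calG_isConeOverCliques.zeroForcingNumber_eq (calGBlock_exists_ne hk1 hk2)
      (v₀ := ⟨1, by omega⟩) (by simp [Fin.ext_iff]),
    calGBlock_image hk1 hk2, Set.ncard_Iio_nat, Nat.card_eq_fintype_card, Fintype.card_fin]
  omega
end
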